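/- arXiv:1710.07984 — 3 statements merged into one kernel-verified Lean document; each statement's English description precedes it below -/
import Mathlib

section
/- The equilibrium statement for the three-level system holds for arbitrary functions a, c : [0,1] → [0,1] satisfying a(0) = 0 and a(1) = c(1) = 1: every point of the line R_2 = 1 - R_0, R_0 ∈ [0,1), is an equilibrium at which p_c = 1. -/
/-- The equilibrium result for the three-level system holds for arbitrary
a, c : [0,1] → [0,1] with a(0) = 0 and a(1) = c(1) = 1: every point of the line
R_2 = 1 - R_0, R_0 ∈ [0,1), is an equilibrium at which p_c = 1. -/
theorem stmt_9 (a c : ℝ → ℝ)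
    (hamap : ∀ r ∈ Set.Icc (0:ℝ) 1, a r ∈ Set.Icc (0:ℝ) 1)
    (hcmap : ∀ r ∈ Set.Icc (0:ℝ) 1, c r ∈ Set.Icc (0:ℝ) 1)
    (ha0 : a 0 = 0) (ha1 : a 1 = 1) (hc1 : c 1 = 1)
    (R0 : ℝ) (hR0 : 0 ≤ R0) (hR0' : R0 < 1) (R2 : ℝ) (hR2 : R2 = 1 - R0)
    (pind pc : ℝ)
    (hpind : pind = ((1/2) * (1 - R0 - R2) * c (1/2) + 1 * R2 * c 1) /
      ((1/2) * (1 - R0 - R2) + 1 * R2))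
    (hpc : pc = pind ^ 2 * (3 - 2 * pind))
    (e : ℝ → ℝ) (he : ∀ r, e r = a r * pc + (1 - a r) * (1 - pc)) :
    (-R0 * e 0 + (1 - R0 - R2) * (1 - e (1/2)) = 0 ∧
     (1 - R0 - R2) * e (1/2) - R2 * (1 - e 1) = 0) ∧ pc = 1 := by
  have hR2pos : R2 ≠ 0 := by rw [hR2]; linarith
  have hpind1 : pind = 1 := by
    rw [hpind, hR2, hc1, show (1:ℝ)-R0-(1-R0) = 0 by ring]
    rw [hR2] at hR2pos
    field_simp
    ring
  have hpc1 : pc = 1 := by rw [hpc, hpind1]; ring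
  refine ⟨⟨?_, ?_⟩, hpc1⟩ <;> simp [he, hR2, ha0, ha1, hpc1] <;> ring
end

section
/- In the one-clique model, for every R_0 ∈ [0, 1 - f_cl], the state with R_L = 1 - f_cl - R_0, Q_0 = f_cl, and all other phase variables zero is an equilibrium of the coupled (2L+2)-dimensional system, and at these equilibria the overall probability of correct evaluation p_c equals 1. -/
/-- Majority-of-three function. -/
noncomputable def maj (t : ℝ) : ℝ := t ^ 2 * (3 - 2 * t)

/-- One-clique model: for every R_0 ∈ [0, 1 - f_cl], the state with
R_L = 1 - f_cl - R_0, Q_0 = f_cl and all other variables zero is an equilibrium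
of the coupled (2L+2)-dimensional system, and there the overall probability of
correct evaluation p_c equals 1. -/
theorem stmt_13 (L : ℕ) (hL : 1 ≤ L) (α σ γ plam fcl : ℝ)
    (hα : α ∈ Set.Icc (-1:ℝ) 1) (hσ : σ ∈ Set.Icc (-1:ℝ) 1)
    (hγ : γ ∈ Set.Icc (0:ℝ) 1) (hplam : plam ∈ Set.Icc (0:ℝ) (1/2))
    (hfcl : fcl ∈ Set.Icc (0:ℝ) 1)
    (R0 : ℝ) (hR0 : R0 ∈ Set.Icc (0:ℝ) (1 - fcl))
    (R Q : ℕ → ℝ)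
    (hR : ∀ k, R k = if k = 0 then R0 else if k = L then 1 - fcl - R0 else 0)
    (hQ : ∀ k, Q k = if k = 0 then fcl else 0)
    (a c : ℝ → ℝ)
    (ha : ∀ r, a r = r * (1 + α * (1 - r)))
    (hc : ∀ r, c r = r * (1 + σ * (1 - r)))
    (sreg scl : ℕ → ℝ)
    (hsreg : ∀ k, sreg k = ((k : ℝ) / L) * R k /
      (∑ i ∈ Finset.range (L + 1), ((i : ℝ) / L) * (R i + Q i)))
    (hscl : ∀ k, scl k = ((k : ℝ) / L) * Q k /
      (∑ i ∈ Finset.range (L + 1), ((i : ℝ) / L) * (R i + Q i)))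
    (pcgA pmgF pcqA pmqF pcqbA pmqbF : ℝ)
    (hpcgA : pcgA = ∑ k ∈ Finset.range (L + 1), sreg k * c ((k : ℝ) / L) +
      (1/2) * ∑ k ∈ Finset.range (L + 1), scl k)
    (hpmgF : pmgF = ∑ k ∈ Finset.range (L + 1), sreg k * (1 - c ((k : ℝ) / L)) +
      (1/2) * ∑ k ∈ Finset.range (L + 1), scl k)
    (hpcqA : pcqA = ∑ k ∈ Finset.range (L + 1), sreg k * c ((k : ℝ) / L) +
      ∑ k ∈ Finset.range (L + 1), scl k)
    (hpmqF : pmqF = ∑ k ∈ Finset.range (L + 1), sreg k * (1 - c ((k : ℝ) / L)) +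
      ∑ k ∈ Finset.range (L + 1), scl k)
    (hpcqbA : pcqbA = ∑ k ∈ Finset.range (L + 1), sreg k * c ((k : ℝ) / L))
    (hpmqbF : pmqbF = ∑ k ∈ Finset.range (L + 1), sreg k * (1 - c ((k : ℝ) / L)))
    (ereg ecl : ℕ → ℝ)
    (hereg : ∀ k, ereg k =
      (1 - 2 * plam) * a ((k : ℝ) / L) * maj pcgA +
      (1 - 2 * plam) * (1 - a ((k : ℝ) / L)) * maj pmgF +
      plam * a ((k : ℝ) / L) * maj pcqA +
      plam * (1 - a ((k : ℝ) / L)) * maj pmqF +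
      plam * a ((k : ℝ) / L) * maj pcqbA +
      plam * (1 - a ((k : ℝ) / L)) * maj pmqbF)
    (hecl : ∀ k, ecl k = γ * a ((k : ℝ) / L) * maj pcqA +
      (1 - γ * a ((k : ℝ) / L)) * maj pmqF)
    (pc : ℝ)
    (hpc : pc =
      ((1 - 2 * plam) * ∑ k ∈ Finset.range (L + 1), R k * a ((k : ℝ) / L)) * maj pcgA +
      ((1 - 2 * plam) * ∑ k ∈ Finset.range (L + 1), R k * (1 - a ((k : ℝ) / L))) *
        (1 - maj pmgF) +
      (plam * ∑ k ∈ Finset.range (L + 1), R k * a ((k : ℝ) / L) +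
        ∑ k ∈ Finset.range (L + 1), Q k * (γ * a ((k : ℝ) / L))) * maj pcqA +
      (plam * ∑ k ∈ Finset.range (L + 1), R k * (1 - a ((k : ℝ) / L)) +
        ∑ k ∈ Finset.range (L + 1), Q k * (1 - γ * a ((k : ℝ) / L))) * (1 - maj pmqF) +
      (plam * ∑ k ∈ Finset.range (L + 1), R k * a ((k : ℝ) / L)) * maj pcqbA +
      (plam * ∑ k ∈ Finset.range (L + 1), R k * (1 - a ((k : ℝ) / L))) * (1 - maj pmqbF)) :
    (-(R 0) * ereg 0 + R 1 * (1 - ereg 1) = 0) ∧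
    (∀ k, 1 ≤ k → k ≤ L - 1 →
      R (k - 1) * ereg (k - 1) - R k + R (k + 1) * (1 - ereg (k + 1)) = 0) ∧
    (R (L - 1) * ereg (L - 1) - R L * (1 - ereg L) = 0) ∧
    (-(Q 0) * ecl 0 + Q 1 * (1 - ecl 1) = 0) ∧
    (∀ k, 1 ≤ k → k ≤ L - 1 →
      Q (k - 1) * ecl (k - 1) - Q k + Q (k + 1) * (1 - ecl (k + 1)) = 0) ∧
    (Q (L - 1) * ecl (L - 1) - Q L * (1 - ecl L) = 0) ∧
    pc = 1 := by
  have hL0 : L ≠ 0 := by omega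
  have hLne : (L:ℝ) ≠ 0 := Nat.cast_ne_zero.mpr hL0
  have hLL : (L:ℝ)/L = 1 := div_self hLne
  have hmemL : L ∈ Finset.range (L+1) := Finset.self_mem_range_succ L
  have hmem0 : 0 ∈ Finset.range (L+1) := by simp
  set rL : ℝ := 1 - fcl - R0 with hrL
  set e : ℝ := if rL = 0 then 0 else 1 with he
  have hRL : R L = rL := by rw [hR]; simp [hL0]
  have hR00 : R 0 = R0 := by rw [hR]; simp
  have hQ0 : Q 0 = fcl := by rw [hQ]; simp
  have a0 : a 0 = 0 := by rw [ha]; ring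
  have a1 : a 1 = 1 := by rw [ha]; ring
  have c1 : c 1 = 1 := by rw [hc]; ring
  have hD : (∑ i ∈ Finset.range (L + 1), ((i : ℝ) / L) * (R i + Q i)) = rL := by
    rw [Finset.sum_eq_single_of_mem L hmemL]
    · rw [hLL, hRL, hQ]; simp [hL0]
    · intro i _ hiL
      rcases eq_or_ne i 0 with h0 | h0
      · simp [h0]
      · rw [hR, hQ]; simp [h0, hiL]
  have hre : rL * e = rL := by
    rcases eq_or_ne rL 0 with h | h
    · simp [h]
    · simp [he, h]
  have hsreg' : ∀ k, sreg k = if k = L then e else 0 := by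
    intro k
    rw [hsreg, hD]
    by_cases hk : k = L
    · subst hk
      rw [hLL, hRL, one_mul]
      rcases eq_or_ne rL 0 with h | h
      · simp [he, h]
      · simp [he, h, div_self h]
    · rw [hR]
      rcases eq_or_ne k 0 with h0 | h0
      · subst h0; simp [hk]
      · simp [h0, hk]
  have hscl' : ∀ k, scl k = 0 := by
    intro k
    rw [hscl, hQ, hD]
    rcases eq_or_ne k 0 with h0 | h0
    · simp [h0]
    · simp [h0]
  have hS1 : (∑ k ∈ Finset.range (L + 1), sreg k * c ((k : ℝ) / L)) = e := by
    rw [Finset.sum_eq_single_of_mem L hmemL]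
    · rw [hsreg' L, hLL, c1]; simp
    · intro i _ hiL; rw [hsreg' i]; simp [hiL]
  have hS2 : (∑ k ∈ Finset.range (L + 1), sreg k * (1 - c ((k : ℝ) / L))) = 0 := by
    apply Finset.sum_eq_zero
    intro i _
    rw [hsreg' i]
    by_cases hiL : i = L
    · subst hiL; rw [hLL, c1]; simp
    · simp [hiL]
  have hS3 : (∑ k ∈ Finset.range (L + 1), scl k) = 0 :=
    Finset.sum_eq_zero fun i _ => hscl' i
  have hpcgA' : pcgA = e := by rw [hpcgA, hS1, hS3]; ring
  have hpmgF' : pmgF = 0 := by rw [hpmgF, hS2, hS3]; ring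
  have hpcqA' : pcqA = e := by rw [hpcqA, hS1, hS3]; ring
  have hpmqF' : pmqF = 0 := by rw [hpmqF, hS2, hS3]; ring
  have hpcqbA' : pcqbA = e := by rw [hpcqbA, hS1]
  have hpmqbF' : pmqbF = 0 := by rw [hpmqbF, hS2]
  have maj0 : maj 0 = 0 := by simp [maj]
  have maje : maj e = e := by
    rcases eq_or_ne rL 0 with h | h
    · simp [he, h, maj]
    · simp [he, h, maj]; ring
  have heregk : ∀ k, ereg k = a ((k : ℝ) / L) * e := by
    intro k
    rw [hereg, hpcgA', hpmgF', hpcqA', hpmqF', hpcqbA', hpmqbF', maje, maj0]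
    ring
  have heclk : ∀ k, ecl k = γ * a ((k : ℝ) / L) * e := by
    intro k
    rw [hecl, hpcqA', hpmqF', maje, maj0]
    ring
  have ereg0 : ereg 0 = 0 := by
    rw [heregk]; norm_num [a0]
  have eregL : ereg L = e := by
    rw [heregk, hLL, a1, one_mul]
  have ecl0 : ecl 0 = 0 := by
    rw [heclk]; norm_num [a0]
  have hkey : R L * (1 - ereg L) = 0 := by
    rw [hRL, eregL]
    rcases eq_or_ne rL 0 with h | h
    · simp [h]
    · simp [he, h]
  refine ⟨?_, ?_, ?_, ?_, ?_, ?_, ?_⟩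
  · -- first R equation
    rw [ereg0]
    by_cases h1 : L = 1
    · have : R 1 * (1 - ereg 1) = 0 := by rw [← h1]; exact hkey
      rw [this]; ring
    · rw [hR 1, if_neg (by omega), if_neg (by omega)]; ring
  · -- middle R equations
    intro k hk1 hk2
    have hkL : k < L := by omega
    have hRk : R k = 0 := by rw [hR, if_neg (by omega), if_neg (by omega)]
    have h1 : R (k - 1) * ereg (k - 1) = 0 := by
      rcases eq_or_ne k 1 with h | h
      · subst h; simp [hR00, ereg0]
      · rw [hR, if_neg (by omega), if_neg (by omega), zero_mul]
    have h3 : R (k + 1) * (1 - ereg (k + 1)) = 0 := by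
      rcases eq_or_ne (k + 1) L with h | h
      · rw [h]; exact hkey
      · rw [hR]; simp [(by omega : k + 1 ≠ 0), h]
    rw [h1, hRk, h3]; ring
  · -- last R equation
    have h1 : R (L - 1) * ereg (L - 1) = 0 := by
      rcases eq_or_ne L 1 with h | h
      · rw [h]; simp [hR00, ereg0]
      · rw [hR, if_neg (by omega), if_neg (by omega), zero_mul]
    rw [h1, hkey]; ring
  · -- first Q equation
    rw [ecl0, hQ 1]; simp
  · -- middle Q equations
    intro k hk1 hk2
    have hQk : Q k = 0 := by rw [hQ, if_neg (by omega)]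
    have h1 : Q (k - 1) * ecl (k - 1) = 0 := by
      rcases eq_or_ne k 1 with h | h
      · subst h; simp [hQ0, ecl0]
      · rw [hQ, if_neg (by omega), zero_mul]
    have h3 : Q (k + 1) = 0 := by rw [hQ]; simp
    rw [h1, hQk, h3]; ring
  · -- last Q equation
    have h1 : Q (L - 1) * ecl (L - 1) = 0 := by
      rcases eq_or_ne L 1 with h | h
      · rw [h]; simp [hQ0, ecl0]
      · rw [hQ, if_neg (by omega), zero_mul]
    have h2 : Q L = 0 := by rw [hQ]; simp [hL0]
    rw [h1, h2]; ring
  · -- pc = 1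
    have hRa : (∑ k ∈ Finset.range (L + 1), R k * a ((k : ℝ) / L)) = rL := by
      rw [Finset.sum_eq_single_of_mem L hmemL]
      · rw [hRL, hLL, a1]; ring
      · intro i _ hiL
        rcases eq_or_ne i 0 with h0 | h0
        · subst h0; norm_num [a0]
        · rw [hR]; simp [h0, hiL]
    have hRna : (∑ k ∈ Finset.range (L + 1), R k * (1 - a ((k : ℝ) / L))) = R0 := by
      rw [Finset.sum_eq_single_of_mem 0 hmem0]
      · rw [hR00]; norm_num [a0]
      · intro i _ h0
        rcases eq_or_ne i L with hiL | hiL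
        · subst hiL; rw [hLL, a1, hRL]; ring
        · rw [hR]; simp [h0, hiL]
    have hQa : (∑ k ∈ Finset.range (L + 1), Q k * (γ * a ((k : ℝ) / L))) = 0 := by
      apply Finset.sum_eq_zero
      intro i _
      rcases eq_or_ne i 0 with h0 | h0
      · subst h0; norm_num [a0]
      · rw [hQ]; simp [h0]
    have hQna : (∑ k ∈ Finset.range (L + 1), Q k * (1 - γ * a ((k : ℝ) / L))) = fcl := by
      rw [Finset.sum_eq_single_of_mem 0 hmem0]
      · rw [hQ0]; norm_num [a0]
      · intro i _ h0; rw [hQ]; simp [h0]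
    rw [hpc, hRa, hRna, hQa, hQna, hpcgA', hpmgF', hpcqA', hpmqF', hpcqbA', hpmqbF',
      maje, maj0]
    linear_combination hre + hrL
end

section
/- In the two-antagonistic-cliques model, for every R_0 ∈ [0, 1 - f_cl - f_acl], the state with R_L = 1 - f_cl - f_acl - R_0, Q_0 = f_cl, U_0 = f_acl, and all other phase variables zero is an equilibrium, and at these equilibria p_c = 1. -/
/-- Two-antagonistic-cliques model: for every R_0 ∈ [0, 1 - f_cl - f_acl], the
state with R_L = 1 - f_cl - f_acl - R_0, Q_0 = f_cl, U_0 = f_acl, and all other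
variables zero, is an equilibrium, and at these equilibria p_c = 1. -/
theorem stmt_16 (L : ℕ) (hL : 1 ≤ L) (α σ γ plam fcl facl : ℝ)
    (hα : α ∈ Set.Icc (-1:ℝ) 1) (hσ : σ ∈ Set.Icc (-1:ℝ) 1)
    (hγ : γ ∈ Set.Icc (0:ℝ) 1) (hplam : plam ∈ Set.Icc (0:ℝ) (1/2))
    (hfcl : 0 ≤ fcl) (hfacl : 0 ≤ facl) (hf : fcl + facl ≤ 1)
    (R0 : ℝ) (hR0 : R0 ∈ Set.Icc (0:ℝ) (1 - fcl - facl))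
    (R Q U : ℕ → ℝ)
    (hR : ∀ k, R k = if k = 0 then R0 else if k = L then 1 - fcl - facl - R0 else 0)
    (hQ : ∀ k, Q k = if k = 0 then fcl else 0)
    (hU : ∀ k, U k = if k = 0 then facl else 0)
    (a c : ℝ → ℝ)
    (ha : ∀ r, a r = r * (1 + α * (1 - r)))
    (hc : ∀ r, c r = r * (1 + σ * (1 - r)))
    (sreg scl sacl : ℕ → ℝ)
    (hsreg : ∀ k, sreg k = ((k : ℝ) / L) * R k /
      (∑ i ∈ Finset.range (L + 1), ((i : ℝ) / L) * (R i + Q i + U i)))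
    (hscl : ∀ k, scl k = ((k : ℝ) / L) * Q k /
      (∑ i ∈ Finset.range (L + 1), ((i : ℝ) / L) * (R i + Q i + U i)))
    (hsacl : ∀ k, sacl k = ((k : ℝ) / L) * U k /
      (∑ i ∈ Finset.range (L + 1), ((i : ℝ) / L) * (R i + Q i + U i)))
    (pcgA pmgF pcqA pmqF pcqbA pmqbF : ℝ)
    (hpcgA : pcgA = ∑ k ∈ Finset.range (L + 1), sreg k * c ((k : ℝ) / L) +
      (1/2) * ∑ k ∈ Finset.range (L + 1), (scl k + sacl k))
    (hpmgF : pmgF = ∑ k ∈ Finset.range (L + 1), sreg k * (1 - c ((k : ℝ) / L)) +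
      (1/2) * ∑ k ∈ Finset.range (L + 1), (scl k + sacl k))
    (hpcqA : pcqA = ∑ k ∈ Finset.range (L + 1), sreg k * c ((k : ℝ) / L) +
      ∑ k ∈ Finset.range (L + 1), scl k)
    (hpmqF : pmqF = ∑ k ∈ Finset.range (L + 1), sreg k * (1 - c ((k : ℝ) / L)) +
      ∑ k ∈ Finset.range (L + 1), scl k)
    (hpcqbA : pcqbA = ∑ k ∈ Finset.range (L + 1), sreg k * c ((k : ℝ) / L) +
      ∑ k ∈ Finset.range (L + 1), sacl k)
    (hpmqbF : pmqbF = ∑ k ∈ Finset.range (L + 1), sreg k * (1 - c ((k : ℝ) / L)) +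
      ∑ k ∈ Finset.range (L + 1), sacl k)
    (ereg ecl eacl : ℕ → ℝ)
    (hereg : ∀ k, ereg k =
      (1 - 2 * plam) * a ((k : ℝ) / L) * maj pcgA +
      (1 - 2 * plam) * (1 - a ((k : ℝ) / L)) * maj pmgF +
      plam * a ((k : ℝ) / L) * maj pcqA +
      plam * (1 - a ((k : ℝ) / L)) * maj pmqF +
      plam * a ((k : ℝ) / L) * maj pcqbA +
      plam * (1 - a ((k : ℝ) / L)) * maj pmqbF)
    (hecl : ∀ k, ecl k = γ * a ((k : ℝ) / L) * maj pcqA +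
      (1 - γ * a ((k : ℝ) / L)) * maj pmqF)
    (heacl : ∀ k, eacl k = γ * a ((k : ℝ) / L) * maj pcqbA +
      (1 - γ * a ((k : ℝ) / L)) * maj pmqbF)
    (pc : ℝ)
    (hpc : pc =
      ((1 - 2 * plam) * ∑ k ∈ Finset.range (L + 1), R k * a ((k : ℝ) / L)) * maj pcgA +
      ((1 - 2 * plam) * ∑ k ∈ Finset.range (L + 1), R k * (1 - a ((k : ℝ) / L))) *
        (1 - maj pmgF) +
      (plam * ∑ k ∈ Finset.range (L + 1), R k * a ((k : ℝ) / L) +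
        ∑ k ∈ Finset.range (L + 1), Q k * (γ * a ((k : ℝ) / L))) * maj pcqA +
      (plam * ∑ k ∈ Finset.range (L + 1), R k * (1 - a ((k : ℝ) / L)) +
        ∑ k ∈ Finset.range (L + 1), Q k * (1 - γ * a ((k : ℝ) / L))) * (1 - maj pmqF) +
      (plam * ∑ k ∈ Finset.range (L + 1), R k * a ((k : ℝ) / L) +
        ∑ k ∈ Finset.range (L + 1), U k * (γ * a ((k : ℝ) / L))) * maj pcqbA +
      (plam * ∑ k ∈ Finset.range (L + 1), R k * (1 - a ((k : ℝ) / L)) +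
        ∑ k ∈ Finset.range (L + 1), U k * (1 - γ * a ((k : ℝ) / L))) * (1 - maj pmqbF)) :
    (-(R 0) * ereg 0 + R 1 * (1 - ereg 1) = 0) ∧
    (∀ k, 1 ≤ k → k ≤ L - 1 →
      R (k - 1) * ereg (k - 1) - R k + R (k + 1) * (1 - ereg (k + 1)) = 0) ∧
    (R (L - 1) * ereg (L - 1) - R L * (1 - ereg L) = 0) ∧
    (-(Q 0) * ecl 0 + Q 1 * (1 - ecl 1) = 0) ∧
    (∀ k, 1 ≤ k → k ≤ L - 1 →
      Q (k - 1) * ecl (k - 1) - Q k + Q (k + 1) * (1 - ecl (k + 1)) = 0) ∧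
    (Q (L - 1) * ecl (L - 1) - Q L * (1 - ecl L) = 0) ∧
    (-(U 0) * eacl 0 + U 1 * (1 - eacl 1) = 0) ∧
    (∀ k, 1 ≤ k → k ≤ L - 1 →
      U (k - 1) * eacl (k - 1) - U k + U (k + 1) * (1 - eacl (k + 1)) = 0) ∧
    (U (L - 1) * eacl (L - 1) - U L * (1 - eacl L) = 0) ∧
    pc = 1 := by
  
  obtain ⟨hR0l, hR0u⟩ := hR0
  have hLpos : 0 < L := hL
  have hL0 : L ≠ 0 := hLpos.ne'
  have hLne : (L:ℝ) ≠ 0 := Nat.cast_ne_zero.mpr hL0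
  set B := 1 - fcl - facl - R0 with hBdef
  have hRL : R L = B := by rw [hR]; simp [hL0]
  have hR3 : ∀ k, k ≠ 0 → k ≠ L → R k = 0 := fun k h0 hl => by rw [hR]; simp [h0, hl]
  have hQ3 : ∀ k, k ≠ 0 → Q k = 0 := fun k h0 => by rw [hQ]; simp [h0]
  have hU3 : ∀ k, k ≠ 0 → U k = 0 := fun k h0 => by rw [hU]; simp [h0]
  have hnum : ∀ i, i ≠ L → ((i:ℝ)/L) * R i = 0 := by
    intro i hi
    rcases eq_or_ne i 0 with h0 | h0
    · simp [h0]
    · rw [hR3 i h0 hi]; ring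
  have hnumQ : ∀ i : ℕ, ((i:ℝ)/L) * Q i = 0 := by
    intro i
    rcases eq_or_ne i 0 with h0 | h0
    · simp [h0]
    · rw [hQ3 i h0]; ring
  have hnumU : ∀ i : ℕ, ((i:ℝ)/L) * U i = 0 := by
    intro i
    rcases eq_or_ne i 0 with h0 | h0
    · simp [h0]
    · rw [hU3 i h0]; ring
  have hD : ∑ i ∈ Finset.range (L + 1), ((i:ℝ)/L) * (R i + Q i + U i) = B := by
    rw [Finset.sum_eq_single L]
    · rw [hQ3 L hL0, hU3 L hL0, hRL, div_self hLne]; ring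
    · intro i _ hiL
      rw [mul_add, mul_add, hnum i hiL, hnumQ, hnumU]; ring
    · intro h; exact absurd (Finset.self_mem_range_succ L) h
  have hsreg' : ∀ k, sreg k = ((k:ℝ)/L) * R k / B := fun k => by rw [hsreg, hD]
  have hscl0 : ∀ k, scl k = 0 := fun k => by rw [hscl, hD, hnumQ, zero_div]
  have hsacl0 : ∀ k, sacl k = 0 := fun k => by rw [hsacl, hD, hnumU, zero_div]
  have hSclacl : ∑ k ∈ Finset.range (L + 1), (scl k + sacl k) = 0 :=
    Finset.sum_eq_zero fun k _ => by rw [hscl0, hsacl0]; ring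
  have hSscl : ∑ k ∈ Finset.range (L + 1), scl k = 0 :=
    Finset.sum_eq_zero fun k _ => hscl0 k
  have hSsacl : ∑ k ∈ Finset.range (L + 1), sacl k = 0 :=
    Finset.sum_eq_zero fun k _ => hsacl0 k
  have haz : a (((0:ℕ):ℝ)/(L:ℝ)) = 0 := by rw [ha]; norm_num
  have haL : a (((L:ℕ):ℝ)/(L:ℝ)) = 1 := by rw [div_self hLne, ha]; ring
  have hcL : c (((L:ℕ):ℝ)/(L:ℝ)) = 1 := by rw [div_self hLne, hc]; ring
  have hsumR : ∀ f : ℕ → ℝ, (∑ k ∈ Finset.range (L + 1), R k * f k) = R0 * f 0 + B * f L := by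
    intro f
    have h1 : ∀ k ∈ Finset.range (L + 1), R k * f k =
        (if k = 0 then R0 * f 0 else 0) + (if k = L then B * f L else 0) := by
      intro k _
      rcases eq_or_ne k 0 with h | h
      · subst h; rw [hR]; simp [Ne.symm hL0]
      · rcases eq_or_ne k L with h2 | h2
        · subst h2; rw [hRL]; simp [h]
        · rw [hR3 k h h2]; simp [h, h2]
    rw [Finset.sum_congr rfl h1, Finset.sum_add_distrib]
    rw [Finset.sum_ite_eq' (Finset.range (L + 1)) 0 (fun _ => R0 * f 0),
      Finset.sum_ite_eq' (Finset.range (L + 1)) L (fun _ => B * f L)]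
    simp [Finset.mem_range]
  have hsumQ : ∀ f : ℕ → ℝ, (∑ k ∈ Finset.range (L + 1), Q k * f k) = fcl * f 0 := by
    intro f
    rw [Finset.sum_eq_single 0]
    · rw [hQ]; simp
    · intro i _ hi; rw [hQ3 i hi]; ring
    · intro h; simp at h
  have hsumU : ∀ f : ℕ → ℝ, (∑ k ∈ Finset.range (L + 1), U k * f k) = facl * f 0 := by
    intro f
    rw [Finset.sum_eq_single 0]
    · rw [hU]; simp
    · intro i _ hi; rw [hU3 i hi]; ring
    · intro h; simp at h
  have hSRa : ∑ k ∈ Finset.range (L + 1), R k * a ((k:ℝ)/L) = B := by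
    rw [hsumR fun k => a ((k:ℝ)/L), haz, haL]; ring
  have hSR1a : ∑ k ∈ Finset.range (L + 1), R k * (1 - a ((k:ℝ)/L)) = R0 := by
    rw [hsumR fun k => 1 - a ((k:ℝ)/L), haz, haL]; ring
  have hSQga : ∑ k ∈ Finset.range (L + 1), Q k * (γ * a ((k:ℝ)/L)) = 0 := by
    rw [hsumQ fun k => γ * a ((k:ℝ)/L), haz]; ring
  have hSQ1 : ∑ k ∈ Finset.range (L + 1), Q k * (1 - γ * a ((k:ℝ)/L)) = fcl := by
    rw [hsumQ fun k => 1 - γ * a ((k:ℝ)/L), haz]; ring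
  have hSUga : ∑ k ∈ Finset.range (L + 1), U k * (γ * a ((k:ℝ)/L)) = 0 := by
    rw [hsumU fun k => γ * a ((k:ℝ)/L), haz]; ring
  have hSU1 : ∑ k ∈ Finset.range (L + 1), U k * (1 - γ * a ((k:ℝ)/L)) = facl := by
    rw [hsumU fun k => 1 - γ * a ((k:ℝ)/L), haz]; ring
  have m1 : maj 1 = 1 := by norm_num [maj]
  have m0 : maj 0 = 0 := by norm_num [maj]
  have key : (∀ k, k ≠ 0 → R k * (1 - ereg k) = 0) ∧ (∀ k, k ≠ L → R k * ereg k = 0) ∧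
      ecl 0 = 0 ∧ eacl 0 = 0 ∧ pc = 1 := by
    rcases eq_or_ne B 0 with hB0 | hB0
    · -- degenerate case: everything selected with probability 0
      have hsregz : ∀ k, sreg k = 0 := fun k => by rw [hsreg', hB0, div_zero]
      have hSc : ∑ k ∈ Finset.range (L + 1), sreg k * c ((k:ℝ)/L) = 0 :=
        Finset.sum_eq_zero fun k _ => by rw [hsregz]; ring
      have hSc1 : ∑ k ∈ Finset.range (L + 1), sreg k * (1 - c ((k:ℝ)/L)) = 0 :=
        Finset.sum_eq_zero fun k _ => by rw [hsregz]; ring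
      have mA : maj pcgA = 0 := by rw [hpcgA, hSc, hSclacl]; norm_num [m0]
      have mF : maj pmgF = 0 := by rw [hpmgF, hSc1, hSclacl]; norm_num [m0]
      have mqA : maj pcqA = 0 := by rw [hpcqA, hSc, hSscl]; norm_num [m0]
      have mqF : maj pmqF = 0 := by rw [hpmqF, hSc1, hSscl]; norm_num [m0]
      have mbA : maj pcqbA = 0 := by rw [hpcqbA, hSc, hSsacl]; norm_num [m0]
      have mbF : maj pmqbF = 0 := by rw [hpmqbF, hSc1, hSsacl]; norm_num [m0]
      have heregz : ∀ k, ereg k = 0 := fun k => by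
        rw [hereg, mA, mF, mqA, mqF, mbA, mbF]; ring
      refine ⟨?_, ?_, ?_, ?_, ?_⟩
      · intro k hk
        rcases eq_or_ne k L with h | h
        · rw [h, hRL, hB0]; ring
        · rw [hR3 k hk h]; ring
      · intro k _; rw [heregz]; ring
      · rw [hecl, mqA, mqF]; ring
      · rw [heacl, mbA, mbF]; ring
      · rw [hpc, hSRa, hSR1a, hSQga, hSQ1, hSUga, hSU1, mA, mF, mqA, mqF, mbA, mbF]
        linear_combination hBdef - hB0
    · -- main case
      have hSc : ∑ k ∈ Finset.range (L + 1), sreg k * c ((k:ℝ)/L) = 1 := by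
        rw [Finset.sum_eq_single L]
        · rw [hsreg' L, hRL, hcL, div_self hLne, one_mul, div_self hB0, one_mul]
        · intro i _ hi; rw [hsreg' i, hnum i hi, zero_div, zero_mul]
        · intro h; exact absurd (Finset.self_mem_range_succ L) h
      have hSc1 : ∑ k ∈ Finset.range (L + 1), sreg k * (1 - c ((k:ℝ)/L)) = 0 := by
        rw [Finset.sum_eq_single L]
        · rw [hsreg' L, hRL, hcL, div_self hLne, one_mul, div_self hB0]; ring
        · intro i _ hi; rw [hsreg' i, hnum i hi, zero_div, zero_mul]
        · intro h; exact absurd (Finset.self_mem_range_succ L) h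
      have mA : maj pcgA = 1 := by rw [hpcgA, hSc, hSclacl]; norm_num [m1]
      have mF : maj pmgF = 0 := by rw [hpmgF, hSc1, hSclacl]; norm_num [m0]
      have mqA : maj pcqA = 1 := by rw [hpcqA, hSc, hSscl]; norm_num [m1]
      have mqF : maj pmqF = 0 := by rw [hpmqF, hSc1, hSscl]; norm_num [m0]
      have mbA : maj pcqbA = 1 := by rw [hpcqbA, hSc, hSsacl]; norm_num [m1]
      have mbF : maj pmqbF = 0 := by rw [hpmqbF, hSc1, hSsacl]; norm_num [m0]
      refine ⟨?_, ?_, ?_, ?_, ?_⟩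
      · intro k hk
        rcases eq_or_ne k L with h | h
        · have : ereg L = 1 := by rw [hereg, haL, mA, mF, mqA, mqF, mbA, mbF]; ring
          rw [h, this]; ring
        · rw [hR3 k hk h]; ring
      · intro k hk
        rcases eq_or_ne k 0 with h | h
        · subst h
          have : ereg 0 = 0 := by rw [hereg, haz, mA, mF, mqA, mqF, mbA, mbF]; ring
          rw [this]; ring
        · rw [hR3 k h hk]; ring
      · rw [hecl, haz, mqA, mqF]; ring
      · rw [heacl, haz, mbA, mbF]; ring
      · rw [hpc, hSRa, hSR1a, hSQga, hSQ1, hSUga, hSU1, mA, mF, mqA, mqF, mbA, mbF]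
        linear_combination hBdef
  obtain ⟨h1, h2, hecl0, heacl0, hpc1⟩ := key
  have hQe : ∀ k, Q k * ecl k = 0 := by
    intro k
    rcases eq_or_ne k 0 with h | h
    · subst h; rw [hecl0]; ring
    · rw [hQ3 k h]; ring
  have hUe : ∀ k, U k * eacl k = 0 := by
    intro k
    rcases eq_or_ne k 0 with h | h
    · subst h; rw [heacl0]; ring
    · rw [hU3 k h]; ring
  refine ⟨?_, ?_, ?_, ?_, ?_, ?_, ?_, ?_, ?_, hpc1⟩
  · linear_combination h1 1 one_ne_zero - h2 0 (by omega)
  · intro k hk1 hk2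
    linear_combination h2 (k - 1) (by omega) - hR3 k (by omega) (by omega) +
      h1 (k + 1) (by omega)
  · linear_combination h2 (L - 1) (by omega) - h1 L (by omega)
  · linear_combination (1 - ecl 1) * hQ3 1 one_ne_zero - hQe 0
  · intro k hk1 hk2
    linear_combination hQe (k - 1) - hQ3 k (by omega) +
      (1 - ecl (k + 1)) * hQ3 (k + 1) (by omega)
  · linear_combination hQe (L - 1) - (1 - ecl L) * hQ3 L (by omega)
  · linear_combination (1 - eacl 1) * hU3 1 one_ne_zero - hUe 0
  · intro k hk1 hk2
    linear_combination hUe (k - 1) - hU3 k (by omega) +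
      (1 - eacl (k + 1)) * hU3 (k + 1) (by omega)
  · linear_combination hUe (L - 1) - (1 - eacl L) * hU3 L (by omega)
end
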